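/- Let A be a C*-algebra, let J ◁ A be a closed two-sided ideal, and let C ⊂ A be a sub-C*-algebra. Assume K ⊂ J is a sub-C*-algebra containing C ∩ J such that the inclusion C ∩ J ⊂ K is proper. Then K is a closed two-sided ideal in the sub-C*-algebra C*(K, C) ⊂ A generated by K and C, and there is a natural *-isomorphism C*(K, C)/K ≅ C/(C ∩ J) induced by the quotient map A → A/J. -/

import Mathlib

noncomputable section

open scoped Topology

universe u v w

/-! ### Covering dimension, local dimension, almost Hausdorff spaces -/

/-- `HasCovDimLE X n` : every finite open cover of `X` has a finite open refinement
of order at most `n + 1`, i.e. the covering dimension of `X` is at most `n`. -/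
def HasCovDimLE (X : Type*) [TopologicalSpace X] (n : ℕ) : Prop :=
  ∀ U : Set (Set X), U.Finite → (∀ u ∈ U, IsOpen u) → ⋃₀ U = Set.univ →
    ∃ V : Set (Set X), V.Finite ∧ (∀ v ∈ V, IsOpen v) ∧ ⋃₀ V = Set.univ ∧
      (∀ v ∈ V, ∃ u ∈ U, v ⊆ u) ∧ ∀ x : X, Set.ncard {v ∈ V | x ∈ v} ≤ n + 1

/-- The covering dimension of a topological space, valued in `ℕ∞`. -/
def covDim (X : Type*) [TopologicalSpace X] : ℕ∞ :=
  sInf {m : ℕ∞ | ∃ n : ℕ, m = (n : ℕ∞) ∧ HasCovDimLE X n}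

/-- `HasLocDimLE X n` : every point has a closed neighborhood of covering dimension `≤ n`. -/
def HasLocDimLE (X : Type*) [TopologicalSpace X] (n : ℕ) : Prop :=
  ∀ x : X, ∃ F : Set X, F ∈ 𝓝 x ∧ IsClosed F ∧ HasCovDimLE F n

/-- The local covering dimension of a topological space, valued in `ℕ∞`. -/
def locDim (X : Type*) [TopologicalSpace X] : ℕ∞ :=
  sInf {m : ℕ∞ | ∃ n : ℕ, m = (n : ℕ∞) ∧ HasLocDimLE X n}

/-- A space is almost Hausdorff if every non-empty closed subset contains a non-empty
relatively open subset which is Hausdorff. -/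
def AlmostHausdorff (X : Type*) [TopologicalSpace X] : Prop :=
  ∀ F : Set X, IsClosed F → F.Nonempty →
    ∃ G : Set X, IsOpen G ∧ (F ∩ G).Nonempty ∧ T2Space ↥(F ∩ G)

/-- Map `ℕ∞ → ℕ∞` by a function on `ℕ`, sending `∞` to `∞` (used for floor operations like
`d ↦ ⌊d/2⌋` with the convention `⌊∞/2⌋ = ∞`). -/
def enatMap (f : ℕ → ℕ) (m : ℕ∞) : ℕ∞ :=
  sInf {k : ℕ∞ | ∃ n : ℕ, m = (n : ℕ∞) ∧ k = (f n : ℕ∞)}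

/-! ### Sub-C*-algebras, ideals, hereditary and full subalgebras, approximation -/

section Subalgebras

variable {A : Type u} [NonUnitalCStarAlgebra A]

/-- `IsIdealIn J D` : `J` is a two-sided ideal in the subalgebra `D` (both regarded as
subalgebras of an ambient C*-algebra). Closed two-sided ideals of a C*-algebra are
automatically star-closed, so representing ideals as star subalgebras is no loss. -/
def IsIdealIn (J D : NonUnitalStarSubalgebra ℂ A) : Prop :=
  J ≤ D ∧ ∀ a ∈ D, ∀ x ∈ J, a * x ∈ J ∧ x * a ∈ J

/-- `IsHereditaryIn B D` : `B` is a hereditary subalgebra of the subalgebra `D`: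
whenever `a ∈ D`, `b ∈ B` and `0 ≤ a ≤ b`, then `a ∈ B`. -/
def IsHereditaryIn [PartialOrder A] [StarOrderedRing A]
    (B D : NonUnitalStarSubalgebra ℂ A) : Prop :=
  B ≤ D ∧ ∀ a ∈ D, ∀ b ∈ B, 0 ≤ a → a ≤ b → a ∈ B

/-- `IsFullIn B D` : `B` is a full subalgebra of the subalgebra `D`, i.e. `B` is contained
in no proper closed two-sided ideal of `D`. -/
def IsFullIn (B D : NonUnitalStarSubalgebra ℂ A) : Prop :=
  B ≤ D ∧ ∀ J : NonUnitalStarSubalgebra ℂ A,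
    IsClosed (J : Set A) → IsIdealIn J D → B ≤ J → D ≤ J

/-- A family of subalgebras approximates `A` if every finite subset of `A` is within `ε`
of one of the subalgebras, for every `ε > 0`. -/
def ApproximatedBy {ι : Sort v} (S : ι → NonUnitalStarSubalgebra ℂ A) : Prop :=
  ∀ F : Finset A, ∀ ε : ℝ, 0 < ε → ∃ i, ∀ x ∈ F, ∃ y ∈ S i, ‖x - y‖ < ε

/-- `ProperlyIncluded s t` : positive contractions of `s` form an approximate unit for `t`;
this is the meaning of "the inclusion `s ⊆ t` is proper". Positivity of `c` is expressed as
`c = star b * b`. -/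
def ProperlyIncluded (s t : Set A) : Prop :=
  s ⊆ t ∧ ∀ x ∈ t, ∀ ε : ℝ, 0 < ε →
    ∃ c ∈ s, (∃ b : A, c = star b * b) ∧ ‖c‖ ≤ 1 ∧ ‖c * x * c - x‖ < ε

end Subalgebras

/-- A bundled (non-unital) C*-algebra, used to quantify existentially over C*-algebras. -/
structure CStarAlgebraBundle : Type (u + 1) where
  carrier : Type u
  [str : NonUnitalCStarAlgebra carrier]

attribute [instance] CStarAlgebraBundle.str

/-- A bundled C*-algebra together with its canonical partial order (in which `0 ≤ a` iff
`a` is a sum of elements `star x * x`; such an order is unique when it exists). -/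
structure OrderedCStarAlgebraBundle : Type (u + 1) where
  carrier : Type u
  [str : NonUnitalCStarAlgebra carrier]
  [po : PartialOrder carrier]
  [sor : StarOrderedRing carrier]

attribute [instance] OrderedCStarAlgebraBundle.str OrderedCStarAlgebraBundle.po
  OrderedCStarAlgebraBundle.sor

/-! ### Representations, the primitive ideal space, CCR and type I algebras -/

/-- A representation of `A` on a complex Hilbert space (in the same universe as `A`). -/
structure HilbertRep (A : Type u) [NonUnitalCStarAlgebra A] : Type (u + 1) where
  H : Type u
  [normedAddCommGroup : NormedAddCommGroup H]
  [innerProductSpace : InnerProductSpace ℂ H]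
  [completeSpace : CompleteSpace H]
  π : A →⋆ₙₐ[ℂ] (H →L[ℂ] H)

attribute [instance] HilbertRep.normedAddCommGroup HilbertRep.innerProductSpace
  HilbertRep.completeSpace

variable {A : Type u} [NonUnitalCStarAlgebra A]

/-- (Topological) irreducibility: the representation is non-zero and has no non-trivial
closed invariant subspace. -/
def HilbertRep.IsIrreducible (ρ : HilbertRep A) : Prop :=
  (∃ a, ρ.π a ≠ 0) ∧ ∀ K : Submodule ℂ ρ.H, IsClosed (K : Set ρ.H) →
    (∀ a : A, ∀ x ∈ K, ρ.π a x ∈ K) → K = ⊥ ∨ K = ⊤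

/-- The kernel of a representation, as a subset of `A`. -/
def HilbertRep.ker (ρ : HilbertRep A) : Set A := {a : A | ρ.π a = 0}

/-- A primitive ideal is the kernel of an irreducible representation. -/
def IsPrimitiveIdeal (A : Type u) [NonUnitalCStarAlgebra A] (I : Set A) : Prop :=
  ∃ ρ : HilbertRep A, ρ.IsIrreducible ∧ I = ρ.ker

/-- The primitive ideal space of `A`. -/
def PrimSpace (A : Type u) [NonUnitalCStarAlgebra A] : Type u :=
  {I : Set A // IsPrimitiveIdeal A I}

/-- The hull-kernel (Jacobson) topology on `Prim(A)`: the closed sets are the sets of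
primitive ideals containing a given subset of `A`. -/
instance (A : Type u) [NonUnitalCStarAlgebra A] : TopologicalSpace (PrimSpace A) :=
  TopologicalSpace.generateFrom
    {U : Set (PrimSpace A) | ∃ S : Set A, U = {I : PrimSpace A | ¬ S ⊆ I.1}}

/-- The topological dimension of a C*-algebra: the supremum of the local covering dimensions
of all locally closed Hausdorff subsets of `Prim(A)`. -/
def topDim (A : Type u) [NonUnitalCStarAlgebra A] : ℕ∞ :=
  ⨆ S : {S : Set (PrimSpace A) // IsLocallyClosed S ∧ T2Space ↥S}, locDim ↥S.1

/-- `T` is a rank-one projection. -/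
def IsRankOneProjection {H : Type*} [NormedAddCommGroup H] [InnerProductSpace ℂ H]
    [CompleteSpace H] (T : H →L[ℂ] H) : Prop :=
  IsSelfAdjoint T ∧ T * T = T ∧ Module.finrank ℂ (LinearMap.range (T : H →ₗ[ℂ] H)) = 1

/-- A C*-algebra is CCR (liminal) if every irreducible representation takes values in the
compact operators. -/
def IsCCR (A : Type u) [NonUnitalCStarAlgebra A] : Prop :=
  ∀ ρ : HilbertRep A, ρ.IsIrreducible → ∀ a : A, IsCompactOperator ⇑(ρ.π a)

/-- `A` has continuous trace: the spectrum (identified with `Prim(A)`, as continuous trace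
algebras are CCR) is Hausdorff and Fell's condition holds. -/
def HasContinuousTrace (A : Type u) [NonUnitalCStarAlgebra A] : Prop :=
  T2Space (PrimSpace A) ∧
    ∀ I : PrimSpace A, ∃ U ∈ 𝓝 I, ∃ a : A, (∃ b : A, a = star b * b) ∧
      ∀ J : PrimSpace A, J ∈ U → ∀ ρ : HilbertRep A, ρ.IsIrreducible → ρ.ker = J.1 →
        IsRankOneProjection (ρ.π a)

/-- A composition series for `A` of length `μ` : an increasing, ordinal-indexed family of
closed two-sided ideals with `J μ = A`, continuous at limit ordinals. -/
def IsCompositionSeries (A : Type u) [NonUnitalCStarAlgebra A] (μ : Ordinal.{u})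
    (J : Ordinal.{u} → NonUnitalStarSubalgebra ℂ A) : Prop :=
  (∀ α, α ≤ μ → IsClosed ((J α : Set A))) ∧
  (∀ α, α ≤ μ → IsIdealIn (J α) ⊤) ∧
  (∀ α β, α ≤ β → β ≤ μ → J α ≤ J β) ∧
  J μ = ⊤ ∧
  ∀ α, α ≤ μ → Order.IsSuccLimit α →
    (J α : Set A) = closure (⋃ γ : {γ : Ordinal.{u} // γ < α}, (J γ.1 : Set A))

/-- The quotient `J' / J` is a CCR algebra, phrased via a surjective star homomorphism out of
`J'` with kernel `J`. -/
def QuotientIsCCR (J' J : NonUnitalStarSubalgebra ℂ A) : Prop :=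
  ∃ B : CStarAlgebraBundle.{u}, ∃ φ : J' →⋆ₙₐ[ℂ] B.carrier,
    Function.Surjective φ ∧ (∀ x : J', φ x = 0 ↔ (x : A) ∈ J) ∧ IsCCR B.carrier

/-- A C*-algebra is type I (postliminal) if it has a composition series starting at `0`
whose successive quotients are CCR. -/
def IsTypeI (A : Type u) [NonUnitalCStarAlgebra A] : Prop :=
  ∃ μ : Ordinal.{u}, ∃ J : Ordinal.{u} → NonUnitalStarSubalgebra ℂ A,
    IsCompositionSeries A μ J ∧ J 0 = ⊥ ∧
      ∀ α, α < μ → QuotientIsCCR (J (α + 1)) (J α)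

/-! ### Noncommutative dimension theories -/

open TopologicalSpace in
/-- `IsDimTheory Mem d` : `d` is a noncommutative dimension theory for the class `Mem` of
C*-algebras (`d` is defined as a total function; only its values on `Mem` matter). The
fields record that `Mem` is closed under isomorphism, ideals, quotients, finite direct sums
and minimal unitizations, that `d` is isomorphism invariant, and axioms (D1)-(D6). -/
structure IsDimTheory (Mem : ∀ (A : Type u) [NonUnitalCStarAlgebra A], Prop)
    (d : ∀ (A : Type u) [NonUnitalCStarAlgebra A], ℕ∞) : Prop where
  mem_iso : ∀ (A B : Type u) [NonUnitalCStarAlgebra A] [NonUnitalCStarAlgebra B],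
    (A ≃⋆ₐ[ℂ] B) → Mem A → Mem B
  mem_ideal : ∀ (A : Type u) [NonUnitalCStarAlgebra A] (J : NonUnitalStarSubalgebra ℂ A)
    (hJ : IsClosed (J : Set A)), IsIdealIn J ⊤ → Mem A → haveI := hJ; Mem J
  mem_quotient : ∀ (A B : Type u) [NonUnitalCStarAlgebra A] [NonUnitalCStarAlgebra B]
    (φ : A →⋆ₙₐ[ℂ] B), Function.Surjective φ → Mem A → Mem B
  mem_sum : ∀ (A B : Type u) [NonUnitalCStarAlgebra A] [NonUnitalCStarAlgebra B],
    Mem A → Mem B → Mem (A × B)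
  mem_unitization : ∀ (A : Type u) [NonUnitalCStarAlgebra A], Mem A → Mem (Unitization ℂ A)
  d_iso : ∀ (A B : Type u) [NonUnitalCStarAlgebra A] [NonUnitalCStarAlgebra B],
    (A ≃⋆ₐ[ℂ] B) → Mem A → d A = d B
  d1 : ∀ (A : Type u) [NonUnitalCStarAlgebra A] (J : NonUnitalStarSubalgebra ℂ A)
    (hJ : IsClosed (J : Set A)), IsIdealIn J ⊤ → Mem A → haveI := hJ; d J ≤ d A
  d2 : ∀ (A B : Type u) [NonUnitalCStarAlgebra A] [NonUnitalCStarAlgebra B]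
    (φ : A →⋆ₙₐ[ℂ] B), Function.Surjective φ → Mem A → d B ≤ d A
  d3 : ∀ (A B : Type u) [NonUnitalCStarAlgebra A] [NonUnitalCStarAlgebra B],
    Mem A → Mem B → d (A × B) = max (d A) (d B)
  d4 : ∀ (A : Type u) [NonUnitalCStarAlgebra A], Mem A → d (Unitization ℂ A) = d A
  d5 : ∀ (A : Type u) [NonUnitalCStarAlgebra A] (n : ℕ), Mem A →
    ∀ {ι : Type u} (S : ι → NonUnitalStarSubalgebra ℂ A), ApproximatedBy S →
      (∀ i, ∃ hc : IsClosed ((S i : Set A)),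
        haveI := hc; Mem (S i) ∧ d (S i) ≤ (n : ℕ∞)) →
      d A ≤ (n : ℕ∞)
  d6 : ∀ (A : Type u) [NonUnitalCStarAlgebra A] (C : NonUnitalStarSubalgebra ℂ A),
    IsClosed (C : Set A) → SeparableSpace C → Mem A →
      ∃ D : NonUnitalStarSubalgebra ℂ A, ∃ hD : IsClosed ((D : Set A)), C ≤ D ∧
        SeparableSpace D ∧ (haveI := hD; Mem D ∧ d D ≤ d A)

/-! ### Compact operators, stabilization and tensor products -/

/-- The Hilbert space `ℓ²(ℕ)`. -/
abbrev HilbertL2 : Type := lp (fun _ : ℕ => ℂ) 2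

/-- The compact operators on a Hilbert space `H`, as a subalgebra of `H →L[ℂ] H`. -/
def compactsSubalg (H : Type*) [NormedAddCommGroup H] [InnerProductSpace ℂ H]
    [CompleteSpace H] : NonUnitalStarSubalgebra ℂ (H →L[ℂ] H) where
  carrier := {T : H →L[ℂ] H | IsCompactOperator ⇑T ∧ IsCompactOperator ⇑(star T)}
  add_mem' := fun hf hg =>
    ⟨by rw [ContinuousLinearMap.coe_add']; exact hf.1.add hg.1,
     by rw [star_add, ContinuousLinearMap.coe_add']; exact hf.2.add hg.2⟩
  zero_mem' :=
    ⟨by rw [ContinuousLinearMap.coe_zero']; exact isCompactOperator_zero,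
     by rw [star_zero, ContinuousLinearMap.coe_zero']; exact isCompactOperator_zero⟩
  mul_mem' := fun {f g} hf hg =>
    ⟨by rw [ContinuousLinearMap.mul_def, ContinuousLinearMap.coe_comp']; exact hf.1.comp_clm g,
     by rw [star_mul, ContinuousLinearMap.mul_def, ContinuousLinearMap.coe_comp']; exact hg.2.comp_clm (star f)⟩
  smul_mem' := fun c {f} hf =>
    ⟨by rw [ContinuousLinearMap.coe_smul']; exact hf.1.smul c,
     by rw [star_smul, ContinuousLinearMap.coe_smul']; exact hf.2.smul (star c)⟩
  star_mem' := fun {f} hf => ⟨hf.2, by rw [star_star]; exact hf.1⟩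

theorem compactsSubalg_isClosed (H : Type*) [NormedAddCommGroup H] [InnerProductSpace ℂ H]
    [CompleteSpace H] : IsClosed ((compactsSubalg H : Set (H →L[ℂ] H))) := by
  have h1 : IsClosed {f : H →L[ℂ] H | IsCompactOperator ⇑f} := isClosed_setOf_isCompactOperator
  have h2 : (compactsSubalg H : Set (H →L[ℂ] H)) =
      {f : H →L[ℂ] H | IsCompactOperator ⇑f} ∩
        (star ⁻¹' {f : H →L[ℂ] H | IsCompactOperator ⇑f}) := rfl
  rw [h2]
  exact h1.inter (h1.preimage continuous_star)

/-- The C*-algebra `𝕂` of compact operators on the separable infinite-dimensional Hilbert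
space `ℓ²(ℕ)`. -/
abbrev KCompact : Type := ↥(compactsSubalg HilbertL2)

noncomputable instance : NonUnitalCStarAlgebra KCompact :=
  haveI := compactsSubalg_isClosed HilbertL2
  NonUnitalStarSubalgebra.nonUnitalCStarAlgebra _

/-- `t` realizes `T` as a C*-tensor product of `A` and `B` : `t` is a bilinear map which is
multiplicative and star preserving on elementary tensors, the induced map on the algebraic
tensor product is injective, and its range is dense in `T`. (For nuclear algebras -- e.g.
type I algebras, or when one factor is `𝕂` -- such a `T` is unique up to isomorphism.) -/
def IsCStarTensorProduct (A : Type u) (B : Type v) (T : Type w) [NonUnitalCStarAlgebra A]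
    [NonUnitalCStarAlgebra B] [NonUnitalCStarAlgebra T] (t : A →ₗ[ℂ] B →ₗ[ℂ] T) : Prop :=
  (∀ (a a' : A) (b b' : B), t a b * t a' b' = t (a * a') (b * b')) ∧
  (∀ (a : A) (b : B), star (t a b) = t (star a) (star b)) ∧
  Function.Injective (TensorProduct.lift t) ∧
  DenseRange ⇑(TensorProduct.lift t)

/-- Two C*-algebras are stably isomorphic if `A ⊗ 𝕂 ≅ B ⊗ 𝕂`. -/
def StablyIsomorphic (A B : Type u) [NonUnitalCStarAlgebra A] [NonUnitalCStarAlgebra B] :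
    Prop :=
  ∃ (TA TB : CStarAlgebraBundle.{u}) (tA : A →ₗ[ℂ] KCompact →ₗ[ℂ] TA.carrier)
    (tB : B →ₗ[ℂ] KCompact →ₗ[ℂ] TB.carrier),
    IsCStarTensorProduct A KCompact TA.carrier tA ∧
    IsCStarTensorProduct B KCompact TB.carrier tB ∧
    Nonempty (TA.carrier ≃⋆ₐ[ℂ] TB.carrier)

/-- Morita equivalence of C*-algebras, via the linking algebra picture: `A` and `B` are
Morita equivalent iff they are isomorphic to full hereditary subalgebras of a common
C*-algebra. -/
def MoritaEquivalent (A B : Type u) [NonUnitalCStarAlgebra A] [NonUnitalCStarAlgebra B] :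
    Prop :=
  ∃ C : OrderedCStarAlgebraBundle.{u},
    ∃ A' B' : NonUnitalStarSubalgebra ℂ C.carrier,
      IsClosed ((A' : Set C.carrier)) ∧ IsClosed ((B' : Set C.carrier)) ∧
      IsHereditaryIn A' ⊤ ∧ IsFullIn A' ⊤ ∧ IsHereditaryIn B' ⊤ ∧ IsFullIn B' ⊤ ∧
      Nonempty (A ≃⋆ₐ[ℂ] A') ∧ Nonempty (B ≃⋆ₐ[ℂ] B')

/-! ### Stable rank, connected stable rank, real rank -/

/-- The stable rank of a C*-algebra (`sr(A) := sr(Ã)`), valued in `ℕ∞` : the least `n` such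
that the `n`-tuples generating `Ã` as a left ideal are dense in `Ãⁿ`. -/
def stableRank (A : Type u) [NonUnitalCStarAlgebra A] : ℕ∞ :=
  sInf {m : ℕ∞ | ∃ n : ℕ, m = (n : ℕ∞) ∧
    Dense {v : Fin n → Unitization ℂ A |
      ∃ c : Fin n → Unitization ℂ A, ∑ i, c i * v i = 1}}

/-- The connected stable rank of a C*-algebra, valued in `ℕ∞`. -/
def connectedStableRank (A : Type u) [NonUnitalCStarAlgebra A] : ℕ∞ :=
  sInf {m : ℕ∞ | ∃ n : ℕ, m = (n : ℕ∞) ∧ ∀ k : ℕ, n ≤ k →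
    IsConnected {v : Fin k → Unitization ℂ A |
      ∃ c : Fin k → Unitization ℂ A, ∑ i, c i * v i = 1}}

/-- The real rank of a C*-algebra, valued in `ℕ∞` : the least `n` such that the
self-adjoint `(n+1)`-tuples generating `Ã` as a left ideal are dense in `(Ã_sa)^(n+1)`. -/
def realRank (A : Type u) [NonUnitalCStarAlgebra A] : ℕ∞ :=
  sInf {m : ℕ∞ | ∃ n : ℕ, m = (n : ℕ∞) ∧
    Dense {v : Fin (n + 1) → selfAdjoint (Unitization ℂ A) |
      ∃ c : Fin (n + 1) → Unitization ℂ A, ∑ i, c i * (v i : Unitization ℂ A) = 1}}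

end

/-!
The ideal property reduces to `K * C ⊆ K`: for `k ∈ K` and `c ∈ C`, a positive contraction
`e ∈ C ∩ J` with `e k e ≈ k` gives `k c ≈ (e k) (e c)`, and `e c ∈ C ∩ J ⊆ K` because `J` is an
ideal. Then `K + C` is already a *-subalgebra, so `C` maps onto a dense subset of `E / K`; as the
range of a *-homomorphism of C*-algebras is closed, the map `C → E / K` is onto. Its kernel is
`C ∩ K = C ∩ J`.
-/

open scoped ComplexStarModule CStarAlgebra

namespace NonUnitalStarAlgHom

variable {A B : Type*} [NonUnitalCStarAlgebra A] [NonUnitalCStarAlgebra B]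

/-- Clamping the spectrum of `b` to `[-‖φ b‖, ‖φ b‖]` does not change `φ b`. -/
theorem exists_preimage_norm_le_of_isSelfAdjoint (φ : A →⋆ₙₐ[ℂ] B) {b : A}
    (hb : IsSelfAdjoint b) : ∃ a, φ a = φ b ∧ ‖a‖ ≤ ‖φ b‖ := by
  set M := ‖φ b‖
  set f : ℝ → ℝ := fun t => max (-M) (min M t)
  have hM : 0 ≤ M := norm_nonneg _
  have hf0 : f 0 = 0 := by simp [f, hM]
  refine ⟨cfcₙ f b, ?_, norm_cfcₙ_le fun t _ => abs_le.mpr ⟨le_max_left _ _, by simp [f, hM]⟩⟩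
  have hφb : IsSelfAdjoint (φ b) := hb.map φ
  have hfix : Set.EqOn f id (quasispectrum ℝ (φ b)) := fun t ht => by
    have := norm_apply_le_norm_cfcₙ (fun t : ℝ => t) (φ b) ht continuousOn_id rfl hφb
    rw [cfcₙ_id' ℝ (φ b) hφb, Real.norm_eq_abs, abs_le] at this
    exact (congrArg _ (min_eq_right this.2)).trans (max_eq_right this.1)
  rw [NonUnitalStarAlgHom.map_cfcₙ φ f b (hf₀ := hf0) (hφ := map_continuous φ), cfcₙ_congr hfix,
    cfcₙ_id ℝ (φ b) hφb]

theorem exists_preimage_norm_le (φ : A →⋆ₙₐ[ℂ] B) (b : A) :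
    ∃ a, φ a = φ b ∧ ‖a‖ ≤ 2 * ‖φ b‖ := by
  obtain ⟨a₁, h₁, hn₁⟩ := exists_preimage_norm_le_of_isSelfAdjoint φ (ℜ b).2
  obtain ⟨a₂, h₂, hn₂⟩ := exists_preimage_norm_le_of_isSelfAdjoint φ (ℑ b).2
  rw [map_realPart] at h₁ hn₁
  rw [map_imaginaryPart] at h₂ hn₂
  refine ⟨a₁ + Complex.I • a₂, ?_, ?_⟩
  · rw [map_add, map_smul, h₁, h₂, realPart_add_I_smul_imaginaryPart]
  · calc ‖a₁ + Complex.I • a₂‖ ≤ ‖a₁‖ + ‖a₂‖ := by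
          simpa [norm_smul] using norm_add_le a₁ (Complex.I • a₂)
      _ ≤ ‖φ b‖ + ‖φ b‖ :=
          add_le_add (hn₁.trans (by simpa using realPart.norm_le (φ b)))
            (hn₂.trans (by simpa using imaginaryPart.norm_le (φ b)))
      _ = 2 * ‖φ b‖ := by ring

/-- Controlled preimages on the range extend to its closure, by completeness of `A`. -/
theorem isClosed_range (φ : A →⋆ₙₐ[ℂ] B) : IsClosed (Set.range φ) := by
  let f : NormedAddGroupHom A B :=
    (φ : A →+ B).mkNormedAddGroupHom 1 fun a => by simpa using norm_apply_le φ a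
  have hf : f.SurjectiveOnWith (φ : A →+ B).range 2 := by
    rintro _ ⟨b, rfl⟩
    exact exists_preimage_norm_le φ b
  refine closure_subset_iff_isClosed.mp fun q hq => ?_
  obtain ⟨a, rfl, -⟩ := controlled_closure_of_complete two_pos one_pos hf q hq
  exact ⟨a, rfl⟩

theorem surjective_of_denseRange (φ : A →⋆ₙₐ[ℂ] B) (hφ : DenseRange φ) :
    Function.Surjective φ := by
  rw [← Set.range_eq_univ, ← hφ.closure_range, (isClosed_range φ).closure_eq]

end NonUnitalStarAlgHom

namespace NonUnitalStarSubalgebra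

variable {A : Type*} [NonUnitalCStarAlgebra A] {J C K : NonUnitalStarSubalgebra ℂ A}

def idealizer (K : NonUnitalStarSubalgebra ℂ A) : NonUnitalStarSubalgebra ℂ A where
  carrier := {a | ∀ k ∈ K, a * k ∈ K ∧ k * a ∈ K}
  add_mem' ha hb k hk := by
    simpa only [add_mul, mul_add] using
      ⟨add_mem (ha k hk).1 (hb k hk).1, add_mem (ha k hk).2 (hb k hk).2⟩
  zero_mem' k _ := by simp only [zero_mul, mul_zero, zero_mem, and_self]
  mul_mem' ha hb k hk :=
    ⟨by rw [mul_assoc]; exact (ha _ (hb k hk).1).1, by rw [← mul_assoc]; exact (hb _ (ha k hk).2).2⟩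
  smul_mem' r a ha k hk := by
    simpa only [smul_mul_assoc, mul_smul_comm] using
      ⟨SMulMemClass.smul_mem r (ha k hk).1, SMulMemClass.smul_mem r (ha k hk).2⟩
  star_mem' ha k hk :=
    have h := ha (star k) (star_mem hk)
    ⟨by simpa using star_mem h.2, by simpa using star_mem h.1⟩

theorem le_idealizer (K : NonUnitalStarSubalgebra ℂ A) : K ≤ K.idealizer :=
  fun _ ha _ hk => ⟨mul_mem ha hk, mul_mem hk ha⟩

theorem isClosed_idealizer (hK : IsClosed (K : Set A)) : IsClosed (K.idealizer : Set A) := by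
  have : (K.idealizer : Set A) =
      ⋂ k ∈ K, (· * k) ⁻¹' (K : Set A) ∩ (k * ·) ⁻¹' (K : Set A) := by
    ext a
    simp only [Set.mem_iInter, Set.mem_inter_iff, Set.mem_preimage, SetLike.mem_coe]
    rfl
  rw [this]
  exact isClosed_biInter fun k _ =>
    (hK.preimage (continuous_mul_const k)).inter (hK.preimage (continuous_const_mul k))

theorem isIdealIn_of_le_idealizer {D : NonUnitalStarSubalgebra ℂ A} (hKD : K ≤ D)
    (hD : D ≤ K.idealizer) : IsIdealIn K D :=
  ⟨hKD, fun _ ha _ hk => hD ha _ hk⟩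

theorem le_idealizer_of_mul_mem (hKC : ∀ k ∈ K, ∀ c ∈ C, k * c ∈ K) : C ≤ K.idealizer :=
  fun c hc k hk => ⟨by simpa using star_mem (hKC _ (star_mem hk) _ (star_mem hc)), hKC k hk c hc⟩

theorem mul_mem_of_properlyIncluded (hJ : IsIdealIn J ⊤) (hK : IsClosed (K : Set A))
    (hCJK : ProperlyIncluded ((C ⊓ J : NonUnitalStarSubalgebra ℂ A) : Set A) K)
    {k c : A} (hk : k ∈ K) (hc : c ∈ C) : k * c ∈ K := by
  refine hK.closure_subset (Metric.mem_closure_iff.mpr fun ε hε => ?_)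
  obtain ⟨e, ⟨heC, heJ⟩, -, -, hek⟩ := hCJK.2 k hk (ε / (‖c‖ + 1)) (by positivity)
  have hecK : e * c ∈ K := hCJK.1 ⟨mul_mem heC hc, (hJ.2 c trivial e heJ).2⟩
  refine ⟨e * k * (e * c), mul_mem (mul_mem (hCJK.1 ⟨heC, heJ⟩) hk) hecK, ?_⟩
  calc dist (k * c) (e * k * (e * c)) = ‖(e * k * e - k) * c‖ := by
        rw [dist_comm, dist_eq_norm]; congr 1; noncomm_ring
    _ ≤ ‖e * k * e - k‖ * ‖c‖ := norm_mul_le _ _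
    _ < ε / (‖c‖ + 1) * (‖c‖ + 1) := by gcongr; linarith
    _ = ε := div_mul_cancel₀ _ (by positivity)

theorem exists_add_of_mem_adjoin_union (hC : C ≤ K.idealizer) {a : A}
    (ha : a ∈ NonUnitalStarAlgebra.adjoin ℂ ((K : Set A) ∪ C)) :
    ∃ k ∈ K, ∃ c ∈ C, k + c = a := by
  induction ha using NonUnitalStarAlgebra.adjoin_induction with
  | mem a ha =>
    rcases ha with ha | ha
    · exact ⟨a, ha, 0, zero_mem C, add_zero a⟩
    · exact ⟨0, zero_mem K, a, ha, zero_add a⟩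
  | add a b _ _ iha ihb =>
    obtain ⟨k, hk, c, hc, rfl⟩ := iha
    obtain ⟨k', hk', c', hc', rfl⟩ := ihb
    exact ⟨k + k', add_mem hk hk', c + c', add_mem hc hc', by abel⟩
  | zero => exact ⟨0, zero_mem K, 0, zero_mem C, add_zero 0⟩
  | mul a b _ _ iha ihb =>
    obtain ⟨k, hk, c, hc, rfl⟩ := iha
    obtain ⟨k', hk', c', hc', rfl⟩ := ihb
    refine ⟨k * k' + k * c' + c * k', ?_, c * c', mul_mem hc hc', by noncomm_ring⟩
    exact add_mem (add_mem (mul_mem hk hk') (hC hc' k hk).2) (hC hc k' hk').1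
  | smul r a _ iha =>
    obtain ⟨k, hk, c, hc, rfl⟩ := iha
    exact ⟨r • k, SMulMemClass.smul_mem r hk, r • c, SMulMemClass.smul_mem r hc,
      (smul_add r k c).symm⟩
  | star a _ iha =>
    obtain ⟨k, hk, c, hc, rfl⟩ := iha
    exact ⟨star k, star_mem hk, star c, star_mem hc, (star_add k c).symm⟩

theorem denseRange_comp_inclusion_of_forall_exists_add {D : NonUnitalStarSubalgebra ℂ A}
    {Q : Type*} [NonUnitalCStarAlgebra Q] (hKD : K ≤ D)
    (hD : ∀ a ∈ D, ∃ k ∈ K, ∃ c ∈ C, k + c = a) (hCD : C ≤ D.topologicalClosure)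
    (p : D.topologicalClosure →⋆ₙₐ[ℂ] Q) (hp : Function.Surjective p)
    (hpK : ∀ x : D.topologicalClosure, (x : A) ∈ K → p x = 0) :
    DenseRange (p.comp (inclusion hCD)) := by
  have : IsClosed (D.topologicalClosure : Set A) := D.isClosed_topologicalClosure
  have hdense : Dense {x : D.topologicalClosure | (x : A) ∈ D} := by
    refine Topology.IsInducing.subtypeVal.dense_iff.mpr fun x => ?_
    change _ ∈ closure (Subtype.val '' (Subtype.val ⁻¹' (D : Set A)))
    rw [Subtype.image_preimage_coe, Set.inter_eq_right.mpr D.le_topologicalClosure]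
    exact x.2
  refine (hp.denseRange.dense_image (map_continuous p) hdense).mono ?_
  rintro _ ⟨x, hx, rfl⟩
  obtain ⟨k, hk, c, hc, hx⟩ := hD x hx
  refine ⟨⟨c, hc⟩, ?_⟩
  have : x = ⟨k, D.le_topologicalClosure (hKD hk)⟩ + inclusion hCD ⟨c, hc⟩ := Subtype.ext hx.symm
  rw [this, map_add, hpK _ hk, zero_add]
  rfl

end NonUnitalStarSubalgebra

open NonUnitalStarSubalgebra in
theorem stmt12_general (A : Type u) [NonUnitalCStarAlgebra A]
    (J : NonUnitalStarSubalgebra ℂ A) (hJid : IsIdealIn J ⊤)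
    (C : NonUnitalStarSubalgebra ℂ A) (hCc : IsClosed (C : Set A))
    (K : NonUnitalStarSubalgebra ℂ A) (hKc : IsClosed (K : Set A)) (hKJ : K ≤ J)
    (hproper : ProperlyIncluded ((C ⊓ J : NonUnitalStarSubalgebra ℂ A) : Set A)
      (K : Set A)) :
    let E := (NonUnitalStarAlgebra.adjoin ℂ ((K : Set A) ∪ (C : Set A))).topologicalClosure
    IsIdealIn K E ∧
    ∀ hCE : C ≤ E,
      ∀ (Q : CStarAlgebraBundle.{u}) (p : E →⋆ₙₐ[ℂ] Q.carrier),
        Function.Surjective p → (∀ x : E, p x = 0 ↔ (x : A) ∈ K) →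
          Function.Surjective (fun y : C => p ⟨(y : A), hCE y.2⟩) ∧
          ∀ y : C, p ⟨(y : A), hCE y.2⟩ = 0 ↔ (y : A) ∈ J := by
  intro E
  have hC : C ≤ K.idealizer :=
    le_idealizer_of_mul_mem fun _ hk _ hc => mul_mem_of_properlyIncluded hJid hKc hproper hk hc
  have hKD : K ≤ NonUnitalStarAlgebra.adjoin ℂ ((K : Set A) ∪ C) := fun _ hk =>
    NonUnitalStarAlgebra.subset_adjoin ℂ _ (.inl hk)
  have hEK : E ≤ K.idealizer := topologicalClosure_minimal _
    (NonUnitalStarAlgebra.adjoin_le (Set.union_subset K.le_idealizer hC)) (isClosed_idealizer hKc)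
  refine ⟨isIdealIn_of_le_idealizer (hKD.trans (le_topologicalClosure _)) hEK,
    fun hCE Q p hp hker => ⟨?_, fun y => ?_⟩⟩
  · have : IsClosed (C : Set A) := hCc
    exact NonUnitalStarAlgHom.surjective_of_denseRange _ <|
      denseRange_comp_inclusion_of_forall_exists_add hKD
        (fun _ => exists_add_of_mem_adjoin_union hC) hCE p hp fun x hx => (hker x).mpr hx
  · exact (hker _).trans ⟨fun hy => hKJ hy, fun hy => hproper.1 ⟨y.2, hy⟩⟩

/-- Let `J ◁ A` be a closed two-sided ideal, `C ⊆ A` a sub-C*-algebra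
and `K ⊆ J` a sub-C*-algebra containing `C ∩ J` such that the inclusion `C ∩ J ⊆ K` is
proper. Then `K` is a closed two-sided ideal in `E := C*(K, C)`, and the quotient map
`E → E/K` restricts on `C` to a surjection onto `E/K` with kernel `C ∩ J`; that is, there
is a natural isomorphism `C*(K, C)/K ≅ C/(C ∩ J)`. -/
theorem stmt12 (A : Type u) [NonUnitalCStarAlgebra A]
    (J : NonUnitalStarSubalgebra ℂ A) (hJc : IsClosed (J : Set A)) (hJid : IsIdealIn J ⊤)
    (C : NonUnitalStarSubalgebra ℂ A) (hCc : IsClosed (C : Set A))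
    (K : NonUnitalStarSubalgebra ℂ A) (hKc : IsClosed (K : Set A)) (hKJ : K ≤ J)
    (hCJK : C ⊓ J ≤ K)
    (hproper : ProperlyIncluded ((C ⊓ J : NonUnitalStarSubalgebra ℂ A) : Set A)
      (K : Set A)) :
    let E := (NonUnitalStarAlgebra.adjoin ℂ ((K : Set A) ∪ (C : Set A))).topologicalClosure
    IsIdealIn K E ∧
    ∀ hCE : C ≤ E,
      ∀ (Q : CStarAlgebraBundle.{u}) (p : E →⋆ₙₐ[ℂ] Q.carrier),
        Function.Surjective p → (∀ x : E, p x = 0 ↔ (x : A) ∈ K) →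
          Function.Surjective (fun y : C => p ⟨(y : A), hCE y.2⟩) ∧
          ∀ y : C, p ⟨(y : A), hCE y.2⟩ = 0 ↔ (y : A) ∈ J :=
  stmt12_general A J hJid C hCc K hKc hKJ hproper
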